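/- arXiv:1208.5058 — 2 statements merged into one kernel-verified Lean document; each statement's English description precedes it below -/
import Mathlib

section
/- Let k, ℓ, m, n be positive integers with ℓ > k ≥ 2, n > ℓ + 1, m > k + 1, and F^(k)_m = F^(ℓ)_n. Let α = α(k) and φ = α(ℓ) be the dominant roots for k and ℓ respectively. Then |g(φ, ℓ)·φ^{n−1} / (g(α, k)·α^{m−1}) − 1| < 4/α^{m−1}. -/
/-- `gfib k i` is the `k`-generalized Fibonacci number `F^(k)_n` with the shifted index
`i = n + k - 2`: it is `0` for `i < k - 1` (i.e. `n ≤ 0`), `1` for `i = k - 1`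
(i.e. `F^(k)_1 = 1`), and for `i ≥ k` (i.e. `n ≥ 2`) it is the sum of the `k`
preceding terms. -/
def gfib (k : ℕ) (i : ℕ) : ℕ :=
  if _h1 : i < k - 1 then 0
  else if _h2 : i = k - 1 then 1
  else ∑ j ∈ Finset.range k, gfib k (i - 1 - j)
termination_by i
decreasing_by
  simp_wf
  omega

/-- `genFib k n = F^(k)_n`, the `n`-th `k`-generalized Fibonacci number (for `n ≥ 0`). -/
def genFib (k : ℕ) (n : ℕ) : ℕ := gfib k (n + k - 2)

/-- `g x y = (x - 1)/(2 + (y + 1)(x - 2))`. -/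
noncomputable def g (x y : ℝ) : ℝ := (x - 1) / (2 + (y + 1) * (x - 2))

/-!
Write `e_i = gfib k i - c α^i` with `c = g(α, k) / α^(k-1)`, so that
`e_(n+k-2) = F^(k)_n - g(α, k) α^(n-1)`. For every solution `x` of the `k`-term recurrence the
defect `D_i = α^k x_(i+k) - ∑_(j<k) α^(k-1-j) x_(i+j)` is multiplied by `α` at each step
(because `α^(k+1) = 2 α^k - 1`), and `g(α, k)` is exactly the constant making `D_0(e) = 0`.
Then `D ≡ 0` exhibits `e_(i+k)` as an average of `e_i, …, e_(i+k-1)` with weights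
`α^(k-1-j) / α^k`, so `|e_i|` never exceeds its bound `g(α, k)` on the initial window.
As `1/2 < g < 1`, the two approximations of the common value `F^(k)_m = F^(ℓ)_n` differ by less
than `2 < 4 g(α, k)`; dividing by `g(α, k) α^(m-1)` gives the claim.
-/

open Finset

def SatisfiesKBonacciRec (k : ℕ) (x : ℕ → ℝ) : Prop :=
  ∀ i, x (i + k) = ∑ j ∈ range k, x (i + j)

def kbonacciDefect (k : ℕ) (α : ℝ) (x : ℕ → ℝ) (i : ℕ) : ℝ :=
  α ^ k * x (i + k) - ∑ j ∈ range k, α ^ (k - 1 - j) * x (i + j)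

section Recurrence

variable {k : ℕ} {α : ℝ} {x : ℕ → ℝ}

lemma SatisfiesKBonacciRec.add_succ (hx : SatisfiesKBonacciRec k x) (i : ℕ) :
    x (i + k + 1) = 2 * x (i + k) - x i := by
  have hwindow := sum_range_succ (fun j => x (i + j)) k
  rw [sum_range_succ'] at hwindow
  have h1 := hx (i + 1)
  have h0 := hx i
  simp only [add_right_comm i 1, ← add_assoc, add_zero] at hwindow h1 ⊢
  linarith

lemma sum_pow_mul_add_succ (α : ℝ) (x : ℕ → ℝ) (k i : ℕ) :
    ∑ j ∈ range k, α ^ (k - 1 - j) * x (i + 1 + j) + α ^ k * x i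
      = α * ∑ j ∈ range k, α ^ (k - 1 - j) * x (i + j) + x (i + k) := by
  rcases k with _ | k
  · simp
  rw [sum_range_succ, mul_sum, sum_range_succ']
  have hshift : ∀ j ∈ range k, α * (α ^ (k + 1 - 1 - (j + 1)) * x (i + (j + 1)))
      = α ^ (k + 1 - 1 - j) * x (i + 1 + j) := by
    intro j hj
    rw [mem_range] at hj
    rw [← mul_assoc, ← pow_succ', show k + 1 - 1 - (j + 1) + 1 = k + 1 - 1 - j by omega,
      add_right_comm, add_assoc]
  rw [sum_congr rfl hshift]
  simp only [Nat.add_sub_cancel, Nat.sub_self, Nat.sub_zero, pow_zero, one_mul, add_zero]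
  ring_nf

lemma kbonacciDefect_succ (hx : SatisfiesKBonacciRec k x) (hα : α ^ (k + 1) = 2 * α ^ k - 1)
    (i : ℕ) : kbonacciDefect k α x (i + 1) = α * kbonacciDefect k α x i := by
  unfold kbonacciDefect
  rw [add_right_comm, hx.add_succ]
  linear_combination (-1 : ℝ) * sum_pow_mul_add_succ α x k i - x (i + k) * hα

lemma kbonacciDefect_eq_pow_mul (hx : SatisfiesKBonacciRec k x)
    (hα : α ^ (k + 1) = 2 * α ^ k - 1) (i : ℕ) :
    kbonacciDefect k α x i = α ^ i * kbonacciDefect k α x 0 := by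
  induction i with
  | zero => rw [pow_zero, one_mul]
  | succ i ih => rw [kbonacciDefect_succ hx hα, ih, pow_succ', mul_assoc]

lemma abs_le_of_kbonacciDefect_eq_zero (hα : 0 < α) (hroot : α ^ k = ∑ j ∈ range k, α ^ j)
    (hD : ∀ i, kbonacciDefect k α x i = 0) {B : ℝ} (hB : ∀ j < k, |x j| ≤ B) (i : ℕ) :
    |x i| ≤ B := by
  induction i using Nat.strong_induction_on with
  | _ i ih =>
  rcases lt_or_ge i k with hi | hi
  · exact hB i hi
  obtain ⟨i, rfl⟩ : ∃ i', i = i' + k := ⟨i - k, by omega⟩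
  have hαk : 0 < α ^ k := pow_pos hα k
  have haverage : α ^ k * x (i + k) = ∑ j ∈ range k, α ^ (k - 1 - j) * x (i + j) :=
    sub_eq_zero.mp (hD i)
  refine le_of_mul_le_mul_left ?_ hαk
  calc α ^ k * |x (i + k)| = |∑ j ∈ range k, α ^ (k - 1 - j) * x (i + j)| := by
        rw [← haverage, abs_mul, abs_of_pos hαk]
    _ ≤ ∑ j ∈ range k, α ^ (k - 1 - j) * B := by
        refine (abs_sum_le_sum_abs _ _).trans (sum_le_sum fun j hj => ?_)
        rw [abs_mul, abs_of_pos (pow_pos hα _)]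
        exact mul_le_mul_of_nonneg_left (ih _ (by simp at hj; omega)) (pow_pos hα _).le
    _ = α ^ k * B := by
        rw [← sum_mul, sum_range_reflect (fun j => α ^ j), hroot]

end Recurrence

lemma gfib_of_lt {k i : ℕ} (h : i < k - 1) : gfib k i = 0 := by
  rw [gfib]; simp [h]

lemma gfib_sub_one (k : ℕ) : gfib k (k - 1) = 1 := by
  rw [gfib]; simp

lemma gfib_add {k : ℕ} (hk : 0 < k) (i : ℕ) :
    gfib k (i + k) = ∑ j ∈ range k, gfib k (i + j) := by
  rw [gfib, dif_neg (by omega), dif_neg (by omega), ← sum_range_reflect]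
  refine sum_congr rfl fun j hj => ?_
  rw [mem_range] at hj
  congr 1
  omega

lemma sum_range_mul_gfib {k : ℕ} (hk : 0 < k) (f : ℕ → ℝ) :
    ∑ j ∈ range k, f j * gfib k j = f (k - 1) := by
  rw [sum_eq_single_of_mem (k - 1) (by simp; omega), gfib_sub_one, Nat.cast_one, mul_one]
  intro j hj hne
  rw [gfib_of_lt (by simp at hj; omega), Nat.cast_zero, mul_zero]

section DominantRoot

variable {k : ℕ} {α : ℝ}

lemma pow_succ_eq_two_mul_pow_sub_one (hroot : α ^ k = ∑ j ∈ range k, α ^ j) :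
    α ^ (k + 1) = 2 * α ^ k - 1 := by
  linear_combination (α - 1) * hroot + geom_sum_mul α k

lemma natCast_lt_pow (hα : 1 < α) (hk : 2 ≤ k) (hroot : α ^ k = ∑ j ∈ range k, α ^ j) :
    (k : ℝ) < α ^ k := by
  rw [hroot]
  calc (k : ℝ) = ∑ _j ∈ range k, (1 : ℝ) := by simp
    _ < ∑ j ∈ range k, α ^ j :=
        sum_lt_sum (fun j _ => one_le_pow₀ hα.le) ⟨1, by simp; omega, by simpa using hα⟩

lemma g_eq_div (hα : 1 < α) (hk : 2 ≤ k) (hroot : α ^ k = ∑ j ∈ range k, α ^ j) :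
    g α k = (α ^ k - 1) / (2 * α ^ k - k - 1) := by
  have hsucc := pow_succ_eq_two_mul_pow_sub_one hroot
  have hlt := natCast_lt_pow hα hk hroot
  have hkR : (2 : ℝ) ≤ k := by exact_mod_cast hk
  have hden : α ^ k * (2 + ((k : ℝ) + 1) * (α - 2)) = 2 * α ^ k - k - 1 := by
    linear_combination ((k : ℝ) + 1) * hsucc
  have hden_ne : 2 + ((k : ℝ) + 1) * (α - 2) ≠ 0 := by
    rintro h0
    rw [h0, mul_zero] at hden
    linarith
  rw [g, div_eq_div_iff hden_ne (by linarith)]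
  linear_combination (1 - (k : ℝ)) * hsucc

lemma one_half_lt_g (hα : 1 < α) (hk : 2 ≤ k) (hroot : α ^ k = ∑ j ∈ range k, α ^ j) :
    1 / 2 < g α k := by
  have hlt := natCast_lt_pow hα hk hroot
  have hkR : (2 : ℝ) ≤ k := by exact_mod_cast hk
  rw [g_eq_div hα hk hroot, lt_div_iff₀ (by linarith)]
  linarith

lemma g_lt_one (hα : 1 < α) (hk : 2 ≤ k) (hroot : α ^ k = ∑ j ∈ range k, α ^ j) :
    g α k < 1 := by
  have hlt := natCast_lt_pow hα hk hroot
  have hkR : (2 : ℝ) ≤ k := by exact_mod_cast hk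
  rw [g_eq_div hα hk hroot, div_lt_one (by linarith)]
  linarith

end DominantRoot

noncomputable def gfibError (k : ℕ) (α : ℝ) (i : ℕ) : ℝ :=
  gfib k i - g α k / α ^ (k - 1) * α ^ i

section GfibError

variable {k : ℕ} {α : ℝ}

lemma satisfiesKBonacciRec_gfibError (hk : 0 < k) (hroot : α ^ k = ∑ j ∈ range k, α ^ j) :
    SatisfiesKBonacciRec k (gfibError k α) := by
  intro i
  simp only [gfibError]
  rw [sum_sub_distrib, ← mul_sum, gfib_add hk, pow_add, hroot, mul_sum]
  simp only [pow_add, Nat.cast_sum]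

lemma kbonacciDefect_gfibError_zero (hα : 1 < α) (hk : 2 ≤ k)
    (hroot : α ^ k = ∑ j ∈ range k, α ^ j) :
    kbonacciDefect k α (gfibError k α) 0 = 0 := by
  have hc : g α k / α ^ (k - 1) * α ^ (k - 1) = g α k := div_mul_cancel₀ _ (by positivity)
  have hlt := natCast_lt_pow hα hk hroot
  have hkR : (2 : ℝ) ≤ k := by exact_mod_cast hk
  have hg : g α k * (2 * α ^ k - k - 1) = α ^ k - 1 := by
    rw [g_eq_div hα hk hroot, div_mul_cancel₀ _ (by linarith)]
  have hsucc := pow_succ_eq_two_mul_pow_sub_one hroot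
  have htop : (gfib k k : ℝ) = 1 := by
    have hsum := gfib_add (show 0 < k by omega) 0
    simp only [zero_add] at hsum
    simpa [hsum] using sum_range_mul_gfib (show 0 < k by omega) (fun _ => 1)
  have hgfib : ∑ j ∈ range k, α ^ (k - 1 - j) * (gfib k j : ℝ) = 1 := by
    simpa using sum_range_mul_gfib (show 0 < k by omega) (fun j => α ^ (k - 1 - j))
  have hgeom : ∑ j ∈ range k, α ^ (k - 1 - j) * (g α k / α ^ (k - 1) * α ^ j)
      = k * (g α k / α ^ (k - 1) * α ^ (k - 1)) := by
    have hterm : ∀ j ∈ range k, α ^ (k - 1 - j) * (g α k / α ^ (k - 1) * α ^ j)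
        = g α k / α ^ (k - 1) * α ^ (k - 1) := by
      intro j hj
      rw [mem_range] at hj
      rw [mul_left_comm, ← pow_add, Nat.sub_add_cancel (show j ≤ k - 1 by omega)]
    rw [sum_congr rfl hterm, sum_const, card_range, nsmul_eq_mul]
  have hpow : α ^ k = α * α ^ (k - 1) := by
    rw [← pow_succ', Nat.sub_add_cancel (by omega)]
  simp only [kbonacciDefect, gfibError, zero_add, mul_sub, sum_sub_distrib]
  rw [htop, hgfib, hgeom]
  linear_combination (k - α * α ^ k) * hc - g α k / α ^ (k - 1) * α ^ k * hpow
    - g α k * hsucc - hg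

lemma abs_gfibError_le_of_lt (hα : 1 < α) (hk : 2 ≤ k) (hroot : α ^ k = ∑ j ∈ range k, α ^ j)
    {j : ℕ} (hj : j < k) : |gfibError k α j| ≤ g α k := by
  have hG := one_half_lt_g hα hk hroot
  have hpow : 0 < α ^ (k - 1) := by positivity
  rcases lt_or_ge j (k - 1) with hj' | hj'
  · rw [gfibError, gfib_of_lt hj', Nat.cast_zero, zero_sub, abs_neg,
      abs_of_nonneg (by positivity), div_mul_eq_mul_div, div_le_iff₀ hpow]
    exact mul_le_mul_of_nonneg_left (pow_le_pow_right₀ hα.le (by omega)) (by linarith)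
  · obtain rfl : j = k - 1 := by omega
    rw [gfibError, gfib_sub_one, Nat.cast_one, div_mul_cancel₀ _ hpow.ne', abs_le]
    constructor <;> linarith

lemma abs_gfibError_le (hα : 1 < α) (hk : 2 ≤ k) (hroot : α ^ k = ∑ j ∈ range k, α ^ j)
    (i : ℕ) : |gfibError k α i| ≤ g α k := by
  refine abs_le_of_kbonacciDefect_eq_zero (by linarith) hroot (fun i => ?_)
    (fun j hj => abs_gfibError_le_of_lt hα hk hroot hj) i
  rw [kbonacciDefect_eq_pow_mul (satisfiesKBonacciRec_gfibError (by omega) hroot)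
    (pow_succ_eq_two_mul_pow_sub_one hroot), kbonacciDefect_gfibError_zero hα hk hroot, mul_zero]

lemma abs_genFib_sub_le (hα : 1 < α) (hk : 2 ≤ k) (hroot : α ^ k = ∑ j ∈ range k, α ^ j)
    {n : ℕ} (hn : 1 ≤ n) : |(genFib k n : ℝ) - g α k * α ^ (n - 1)| ≤ g α k := by
  have h := abs_gfibError_le hα hk hroot ((k - 1) + (n - 1))
  rwa [gfibError, pow_add, ← mul_assoc, div_mul_cancel₀ _ (by positivity),
    show k - 1 + (n - 1) = n + k - 2 by omega] at h

end GfibError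

theorem ratio_close_to_one_general (k l m n : ℕ) (hk : 2 ≤ k) (hkl : k < l)
    (hn : l + 1 < n) (hm : k + 1 < m) (heq : genFib k m = genFib l n)
    (α φ : ℝ) (hα1 : 1 < α)
    (hαroot : α ^ k = ∑ j ∈ Finset.range k, α ^ j)
    (hφ1 : 1 < φ)
    (hφroot : φ ^ l = ∑ j ∈ Finset.range l, φ ^ j) :
    |g φ l * φ ^ (n - 1) / (g α k * α ^ (m - 1)) - 1| < 4 / α ^ (m - 1) := by
  have hl : 2 ≤ l := by omega
  have hGα := one_half_lt_g hα1 hk hαroot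
  have hGφ := g_lt_one hφ1 hl hφroot
  have hden : 0 < g α k * α ^ (m - 1) := mul_pos (by linarith) (by positivity)
  have hdiff : |g φ l * φ ^ (n - 1) - g α k * α ^ (m - 1)| < 4 * g α k := by
    have hφn := abs_genFib_sub_le hφ1 hl hφroot (show 1 ≤ n by omega)
    have hαm := abs_genFib_sub_le hα1 hk hαroot (show 1 ≤ m by omega)
    rw [← heq, abs_sub_comm] at hφn
    linarith [abs_sub_le (g φ l * φ ^ (n - 1)) (genFib k m) (g α k * α ^ (m - 1))]
  calc |g φ l * φ ^ (n - 1) / (g α k * α ^ (m - 1)) - 1|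
      = |g φ l * φ ^ (n - 1) - g α k * α ^ (m - 1)| / (g α k * α ^ (m - 1)) := by
        rw [div_sub_one hden.ne', abs_div, abs_of_pos hden]
    _ < 4 * g α k / (g α k * α ^ (m - 1)) := div_lt_div_of_pos_right hdiff hden
    _ = 4 / α ^ (m - 1) := by
        rw [mul_comm 4, mul_div_mul_left _ _ (show g α k ≠ 0 by linarith)]

theorem ratio_close_to_one (k l m n : ℕ) (hk : 2 ≤ k) (hkl : k < l)
    (hn : l + 1 < n) (hm : k + 1 < m) (heq : genFib k m = genFib l n)
    (α φ : ℝ) (hα1 : 1 < α) (hα2 : α < 2)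
    (hαroot : α ^ k = ∑ j ∈ Finset.range k, α ^ j)
    (hφ1 : 1 < φ) (hφ2 : φ < 2)
    (hφroot : φ ^ l = ∑ j ∈ Finset.range l, φ ^ j) :
    |g φ l * φ ^ (n - 1) / (g α k * α ^ (m - 1)) - 1| < 4 / α ^ (m - 1) :=
  ratio_close_to_one_general k l m n hk hkl hn hm heq α φ hα1 hαroot hφ1 hφroot
end

section
/- Let k ≥ 2 be an integer, let α = α(k) be the dominant root for k, and let m, n be integers with m ≥ 1 and n ≥ 5. Then 2^{n−2} ≠ g(α, k)·α^{m−1}. -/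
open Polynomial Finset

theorem pow_mul_two_sub_sub_one {R : Type*} [CommRing R] (x : R) (k : ℕ) :
    x ^ k * (2 - x) - 1 = (x - 1) * (∑ j ∈ range k, x ^ j - x ^ k) := by
  linear_combination (-1 : R) * geom_sum_mul x k

theorem pow_mul_two_sub_eq_one {R : Type*} [CommRing R] {x : R} {k : ℕ}
    (h : x ^ k = ∑ j ∈ range k, x ^ j) : x ^ k * (2 - x) = 1 := by
  rw [← sub_eq_zero, pow_mul_two_sub_sub_one, h, sub_self, mul_zero]

theorem geom_sum_mul_pow_lt {s t : ℝ} {k : ℕ} (hk : k ≠ 0) (hs : 0 < s) (hst : s < t) :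
    (∑ j ∈ range k, t ^ j) * s ^ k < (∑ j ∈ range k, s ^ j) * t ^ k := by
  rw [sum_mul, sum_mul]
  refine sum_lt_sum_of_nonempty (nonempty_range_iff.2 hk) fun j hj => ?_
  obtain ⟨d, rfl⟩ := Nat.exists_eq_add_of_lt (mem_range.1 hj)
  have hd : s ^ (d + 1) < t ^ (d + 1) := pow_lt_pow_left₀ hst hs.le d.succ_ne_zero
  calc t ^ j * s ^ (j + d + 1) = (s * t) ^ j * s ^ (d + 1) := by ring
    _ < (s * t) ^ j * t ^ (d + 1) :=
      mul_lt_mul_of_pos_left hd (pow_pos (mul_pos hs (hs.trans hst)) j)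
    _ = s ^ j * t ^ (j + d + 1) := by ring

theorem eq_of_pow_eq_geom_sum {s t : ℝ} {k : ℕ} (hk : k ≠ 0) (hs : 0 < s) (ht : 0 < t)
    (hs_root : s ^ k = ∑ j ∈ range k, s ^ j) (ht_root : t ^ k = ∑ j ∈ range k, t ^ j) :
    s = t := by
  wlog hst : s < t generalizing s t
  · rcases (not_lt.1 hst).eq_or_lt with h | h
    · exact h.symm
    · exact (this ht hs ht_root hs_root h).symm
  have h := geom_sum_mul_pow_lt hk hs hst
  rw [← hs_root, ← ht_root, mul_comm] at h
  exact absurd h (lt_irrefl _)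

theorem Complex.eq_norm_of_norm_sub_le {c : ℝ} {z : ℂ}
    (h : ‖(c : ℂ) - z‖ ≤ c - ‖z‖) : z = ‖z‖ := by
  refine eq_coe_norm_of_nonneg (re_eq_norm.1 (le_antisymm (re_le_norm z) ?_))
  have := re_le_norm ((c : ℂ) - z)
  rw [sub_re, ofReal_re] at this
  linarith

theorem norm_le_one_of_pow_eq_geom_sum {k : ℕ} (hk : k ≠ 0) {α : ℝ} (hα : 0 < α)
    (hα_root : α ^ k = ∑ j ∈ range k, α ^ j) {z : ℂ} (hz : z ^ k = ∑ j ∈ range k, z ^ j)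
    (hne : z ≠ α) : ‖z‖ ≤ 1 := by
  by_contra! hr
  set r := ‖z‖ with hr_def
  have hr_sum : r ^ k ≤ ∑ j ∈ range k, r ^ j :=
    calc r ^ k = ‖∑ j ∈ range k, z ^ j‖ := by rw [← hz, norm_pow]
      _ ≤ ∑ j ∈ range k, ‖z ^ j‖ := norm_sum_le _ _
      _ = ∑ j ∈ range k, r ^ j := by simp only [norm_pow, hr_def]
  have hr_lower : 1 ≤ r ^ k * (2 - r) := by
    have := pow_mul_two_sub_sub_one r k
    nlinarith
  have hr_eq : r ^ k * ‖2 - z‖ = 1 := by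
    rw [← norm_pow, ← norm_mul, pow_mul_two_sub_eq_one hz, norm_one]
  have hz_real : z = r := by
    have h2 : ‖2 - z‖ ≤ 2 - r :=
      le_of_mul_le_mul_left (a := r ^ k) (hr_eq ▸ hr_lower) (by positivity)
    exact Complex.eq_norm_of_norm_sub_le (c := 2) (by exact_mod_cast h2)
  have hr_root : r ^ k = ∑ j ∈ range k, r ^ j := by
    rw [hz_real] at hz
    exact_mod_cast hz
  have hrα : r = α := eq_of_pow_eq_geom_sum hk (by linarith) hα hr_root hα_root
  exact hne (hrα ▸ hz_real)

noncomputable def psi (R : Type*) [CommRing R] (k : ℕ) : R[X] := X ^ k - ∑ j ∈ range k, X ^ j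

theorem psi_monic (R : Type*) [CommRing R] (k : ℕ) : (psi R k).Monic := by
  refine monic_X_pow_sub ((degree_sum_le _ _).trans_lt ?_)
  refine (Finset.sup_lt_iff (WithBot.bot_lt_coe k)).2 fun j hj => ?_
  exact (degree_X_pow_le j).trans_lt (WithBot.coe_lt_coe.2 (mem_range.1 hj))

theorem aeval_psi {R A : Type*} [CommRing R] [CommRing A] [Algebra R A] (x : A) (k : ℕ) :
    aeval x (psi R k) = x ^ k - ∑ j ∈ range k, x ^ j := by
  simp [psi]

theorem isIntegral_of_pow_eq_geom_sum {A : Type*} [CommRing A] {x : A} {k : ℕ}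
    (h : x ^ k = ∑ j ∈ range k, x ^ j) : IsIntegral ℤ x :=
  ⟨psi ℤ k, psi_monic ℤ k, by rw [← aeval_def, aeval_psi, h, sub_self]⟩

theorem irrational_of_pow_eq_geom_sum {α : ℝ} (hα : 1 < α) {k : ℕ}
    (h : α ^ k = ∑ j ∈ range k, α ^ j) : Irrational α := by
  have hα2 : α < 2 := by
    have := pow_mul_two_sub_eq_one h
    nlinarith [pow_pos (zero_lt_one.trans hα) k]
  rintro ⟨q, rfl⟩
  have hq : IsIntegral ℤ q :=
    (isIntegral_algebraMap_iff (algebraMap ℚ ℝ).injective).1 (isIntegral_of_pow_eq_geom_sum h)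
  obtain ⟨n, rfl⟩ := IsIntegrallyClosed.isIntegral_iff.1 hq
  rw [algebraMap_int_eq, eq_intCast] at hα hα2
  norm_cast at hα hα2
  omega

theorem exists_isConjRoot_ne_of_irrational {x : ℝ} (hx : Irrational x) (hint : IsIntegral ℚ x) :
    ∃ z : ℂ, z ≠ x ∧ IsConjRoot ℚ (x : ℂ) z := by
  have hintℂ : IsIntegral ℚ (x : ℂ) := hint.algebraMap
  have hbot : (x : ℂ) ∉ (⊥ : Subalgebra ℚ ℂ) := by
    rw [Algebra.mem_bot]
    rintro ⟨q, hq⟩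
    rw [eq_ratCast] at hq
    exact hx ⟨q, by exact_mod_cast hq⟩
  obtain ⟨z, hne, hconj⟩ := (notMem_iff_exists_ne_and_isConjRoot
    (minpoly.irreducible hintℂ).separable (IsAlgClosed.splits _)).1 hbot
  exact ⟨z, hne.symm, hconj⟩

theorem IsConjRoot.aeval_eq_zero_of_aeval_eq_zero {K A : Type*} [Field K] [Ring A]
    [Algebra K A] {x y : A} (h : IsConjRoot K x y) {p : K[X]} (hp : aeval x p = 0) :
    aeval y p = 0 :=
  aeval_eq_zero_of_dvd_aeval_eq_zero (minpoly.dvd K x hp) h.aeval_eq_zero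

theorem sub_one_mul_pow_eq_of_eq_g_mul {x y c : ℝ} (hc : c ≠ 0) {M : ℕ}
    (h : c = g x y * x ^ M) : (x - 1) * x ^ M = c * (2 + (y + 1) * (x - 2)) := by
  have hden : 2 + (y + 1) * (x - 2) ≠ 0 := by
    intro h0
    rw [g, h0, div_zero, zero_mul] at h
    exact hc h
  rw [h, g]
  field_simp

theorem sub_one_mul_pow_ne {z : ℂ} (hz : ‖z‖ ≤ 1) (M : ℕ) {k N : ℕ} (hk : 2 ≤ k) (hN : 2 ≤ N) :
    (z - 1) * z ^ M ≠ 2 ^ N * (2 + (k + 1) * (z - 2)) := by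
  intro h
  have hlhs : ‖(z - 1) * z ^ M‖ ≤ 2 := by
    rw [norm_mul, norm_pow]
    have h1 : ‖z - 1‖ ≤ 2 := (norm_sub_le z 1).trans (by rw [norm_one]; linarith)
    have h2 : ‖z‖ ^ M ≤ 1 := pow_le_one₀ (norm_nonneg z) hz
    nlinarith [norm_nonneg (z - 1)]
  have hz2 : 1 ≤ ‖z - 2‖ := by
    have := norm_sub_norm_le (2 : ℂ) z
    rw [norm_sub_rev, Complex.norm_two] at this
    linarith
  have hden : 1 ≤ ‖2 + ((k : ℂ) + 1) * (z - 2)‖ := by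
    have hk' : (3 : ℝ) ≤ k + 1 := by norm_cast; omega
    have hk1 : ‖(k : ℂ) + 1‖ = k + 1 := by exact_mod_cast Complex.norm_natCast (k + 1)
    have := norm_sub_le (2 + ((k : ℂ) + 1) * (z - 2)) 2
    rw [add_sub_cancel_left, norm_mul, Complex.norm_two, hk1] at this
    nlinarith
  have h4 : (4 : ℝ) ≤ 2 ^ N :=
    calc (4 : ℝ) = 2 ^ 2 := by norm_num
      _ ≤ 2 ^ N := pow_le_pow_right₀ (by norm_num) hN
  rw [h, norm_mul, norm_pow, Complex.norm_two] at hlhs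
  nlinarith

theorem power_of_two_ne_dominant_term_general (k m n : ℕ) (hk : 2 ≤ k)
    (α : ℝ) (hα1 : 1 < α)
    (hαroot : α ^ k = ∑ j ∈ Finset.range k, α ^ j)
    (hn : 5 ≤ n) :
    (2 : ℝ) ^ (n - 2) ≠ g α k * α ^ (m - 1) := by
  intro h
  have hrel := sub_one_mul_pow_eq_of_eq_g_mul (pow_ne_zero _ two_ne_zero) h
  obtain ⟨z, hne, hconj⟩ := exists_isConjRoot_ne_of_irrational
    (irrational_of_pow_eq_geom_sum hα1 hαroot) (isIntegral_of_pow_eq_geom_sum hαroot).tower_top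
  have hz_root : z ^ k = ∑ j ∈ range k, z ^ j := by
    have hαℂ : (α : ℂ) ^ k = ∑ j ∈ range k, (α : ℂ) ^ j := by exact_mod_cast hαroot
    have := hconj.aeval_eq_zero_of_aeval_eq_zero (p := psi ℚ k)
      (by rw [aeval_psi, hαℂ, sub_self])
    rwa [aeval_psi, sub_eq_zero] at this
  have hz_rel : (z - 1) * z ^ (m - 1) = 2 ^ (n - 2) * (2 + (k + 1) * (z - 2)) := by
    set p : ℚ[X] := (X - 1) * X ^ (m - 1) - 2 ^ (n - 2) * (2 + ((k : ℚ[X]) + 1) * (X - 2))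
    have hp (x : ℂ) :
        aeval x p = (x - 1) * x ^ (m - 1) - 2 ^ (n - 2) * (2 + (k + 1) * (x - 2)) := by
      simp [p, map_ofNat]
    have := hconj.aeval_eq_zero_of_aeval_eq_zero (p := p)
      (by rw [hp]; exact_mod_cast sub_eq_zero.2 hrel)
    rwa [hp, sub_eq_zero] at this
  exact sub_one_mul_pow_ne (norm_le_one_of_pow_eq_geom_sum (by omega) (by linarith) hαroot
    hz_root hne) (m - 1) hk (by omega) hz_rel

theorem power_of_two_ne_dominant_term (k m n : ℕ) (hk : 2 ≤ k)
    (α : ℝ) (hα1 : 1 < α) (hα2 : α < 2)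
    (hαroot : α ^ k = ∑ j ∈ Finset.range k, α ^ j)
    (hm : 1 ≤ m) (hn : 5 ≤ n) :
    (2 : ℝ) ^ (n - 2) ≠ g α k * α ^ (m - 1) :=
  power_of_two_ne_dominant_term_general k m n hk α hα1 hαroot hn
end
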